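/- Propagation of Gaussian initial data for the fitness f(x) = x²: if u₀(x) = √(a/(2π)) e^{-a(x-m)²/2} with a > 0 and m ∈ ℝ, then for every 0 < t < arctan(aσ)/(2σ) and every x ∈ ℝ the explicit solution satisfies u(t,x) = √(a(t)/(2π)) e^{-a(t)(x - m(t))²/2}, where a(t) = (aσ - tan(2σt)) / (σ(1 + aσ tan(2σt))) and m(t) = m a σ / (aσ cos(2σt) - sin(2σt)). In particular, for such u₀ one has T = arctan(aσ)/(2σ) < π/(4σ). -/

import Mathlib

/-!
For Gaussian data both integrals in `uTrig` are integrals of `exp (-α y² + β y + γ)`, which equal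
`√(π / α) * exp (β² / (4α) + γ)` and converge exactly when `α > 0`. For the normalising integral
`α = a / 2 - tan (2σt) / (2σ)`, so it is finite iff `tan (2σt) < aσ`, i.e. `t < arctan (aσ) / (2σ)`;
the explicit formula is then an algebraic identity in `tan (2σt)` and `cos (2σt)`, which only needs
`cos² (1 + tan²) = 1`.
-/

open MeasureTheory

/-- The explicit solution of the replicator-mutator equation with fitness `f(x) = x²`. -/
noncomputable def uTrig (σ : ℝ) (u₀ : ℝ → ℝ) (t x : ℝ) : ℝ :=
  (Real.sqrt (2 * Real.pi * σ * Real.tan (2 * σ * t)))⁻¹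
    * Real.exp (Real.tan (2 * σ * t) * x ^ 2 / (2 * σ))
    * (∫ y : ℝ, Real.exp (-(x / Real.cos (2 * σ * t) - y) ^ 2
        / (2 * σ * Real.tan (2 * σ * t))) * u₀ y)
    / (∫ y : ℝ, Real.exp (Real.tan (2 * σ * t) * y ^ 2 / (2 * σ)) * u₀ y)

/-- The maximal existence time `T` for the fitness `f(x) = x²`. -/
noncomputable def Tmax (σ : ℝ) (u₀ : ℝ → ℝ) : ℝ :=
  sSup {t : ℝ | 0 ≤ t ∧ t < Real.pi / (4 * σ) ∧
    MeasureTheory.Integrable (fun y : ℝ => Real.exp (Real.tan (2 * σ * t) * y ^ 2 / (2 * σ)) * u₀ y)}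

open Real

lemma not_integrable_of_forall_le {α : Type*} [MeasurableSpace α] {μ : Measure α}
    (hμ : μ Set.univ = ⊤) {f : α → ℝ} {δ : ℝ} (hδ : 0 < δ) (hf : ∀ x, δ ≤ f x) :
    ¬ Integrable f μ := by
  intro hint
  have hconst : Integrable (fun _ => δ) μ :=
    hint.mono' aestronglyMeasurable_const
      (ae_of_all _ fun x => by rw [norm_of_nonneg hδ.le]; exact hf x)
  rcases integrable_const_iff.mp hconst with hδ0 | hfin
  · exact hδ.ne' hδ0
  · exact measure_ne_top μ Set.univ hμ

lemma exp_quadratic_eq {α : ℝ} (hα : α ≠ 0) (β γ y : ℝ) :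
    exp (-α * y ^ 2 + β * y + γ)
      = exp (-α * (y - β / (2 * α)) ^ 2) * exp (β ^ 2 / (4 * α) + γ) := by
  rw [← exp_add]
  congr 1
  field_simp
  ring

lemma integral_exp_quadratic {α : ℝ} (hα : 0 < α) (β γ : ℝ) :
    ∫ y, exp (-α * y ^ 2 + β * y + γ) = √(π / α) * exp (β ^ 2 / (4 * α) + γ) := by
  simp_rw [exp_quadratic_eq hα.ne', integral_mul_const,
    integral_sub_right_eq_self (fun y => exp (-α * y ^ 2)), integral_gaussian]

lemma integrable_exp_quadratic_iff (α β γ : ℝ) :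
    Integrable (fun y => exp (-α * y ^ 2 + β * y + γ)) ↔ 0 < α := by
  constructor
  · intro hint
    by_contra! hα
    -- for `α ≤ 0`, `exp u ≥ 1 + u` gives `f y + f (-y) ≥ exp γ * ((1 + β y) + (1 - β y)) = 2 exp γ`
    refine not_integrable_of_forall_le Real.volume_univ (by positivity : 0 < 2 * exp γ)
      (fun y => ?_) (hint.add hint.comp_neg)
    have key : ∀ u, exp γ * (β * u + 1) ≤ exp (-α * u ^ 2 + β * u + γ) := fun u =>
      calc exp γ * (β * u + 1) ≤ exp γ * exp (β * u) := by gcongr; exact add_one_le_exp _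
        _ ≤ exp (-α * u ^ 2 + β * u + γ) := by
          rw [← exp_add]; exact exp_le_exp.mpr (by nlinarith [sq_nonneg u])
    simp only [Pi.add_apply]
    linarith [key y, key (-y)]
  · intro hα
    simp_rw [exp_quadratic_eq hα.ne']
    exact ((integrable_exp_neg_mul_sq hα).comp_sub_right _).mul_const _

noncomputable def gaussianDensity (a m x : ℝ) : ℝ :=
  √(a / (2 * π)) * exp (-a * (x - m) ^ 2 / 2)

section GaussianDensity

variable {a : ℝ} (m : ℝ)

lemma exp_quadratic_mul_gaussianDensity (α β γ y : ℝ) :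
    exp (-α * y ^ 2 + β * y + γ) * gaussianDensity a m y
      = √(a / (2 * π)) * exp (-(α + a / 2) * y ^ 2 + (β + a * m) * y + (γ - a * m ^ 2 / 2)) := by
  rw [gaussianDensity, mul_left_comm, ← exp_add]
  ring_nf

lemma integrable_exp_quadratic_mul_gaussianDensity_iff (ha : 0 < a) (α β γ : ℝ) :
    Integrable (fun y => exp (-α * y ^ 2 + β * y + γ) * gaussianDensity a m y)
      ↔ 0 < α + a / 2 := by
  simp_rw [exp_quadratic_mul_gaussianDensity]
  rw [integrable_const_mul_iff (IsUnit.mk0 _ (by positivity)), integrable_exp_quadratic_iff]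

lemma integral_exp_quadratic_mul_gaussianDensity {α : ℝ} (hα : 0 < α + a / 2) (β γ : ℝ) :
    ∫ y, exp (-α * y ^ 2 + β * y + γ) * gaussianDensity a m y
      = √(a / (2 * π)) * (√(π / (α + a / 2))
          * exp ((β + a * m) ^ 2 / (4 * (α + a / 2)) + (γ - a * m ^ 2 / 2))) := by
  simp_rw [exp_quadratic_mul_gaussianDensity, integral_const_mul, integral_exp_quadratic hα]

end GaussianDensity

section Trigonometry

variable {σ t : ℝ}

lemma two_mul_mem_Ioo_of_lt_pi_div_four_mul (hσ : 0 < σ) (ht₀ : 0 ≤ t) (ht : t < π / (4 * σ)) :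
    2 * σ * t ∈ Set.Ioo (-(π / 2)) (π / 2) := by
  rw [lt_div_iff₀ (by positivity)] at ht
  constructor <;> nlinarith [pi_pos]

lemma tan_two_mul_lt_iff (hσ : 0 < σ) (ht₀ : 0 ≤ t) (ht : t < π / (4 * σ)) (b : ℝ) :
    tan (2 * σ * t) < b ↔ t < arctan b / (2 * σ) := by
  obtain ⟨h₁, h₂⟩ := two_mul_mem_Ioo_of_lt_pi_div_four_mul hσ ht₀ ht
  rw [← arctan_lt_arctan_iff, arctan_tan h₁ h₂, lt_div_iff₀ (by positivity), mul_comm]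

lemma arctan_div_two_mul_lt_pi_div_four_mul (hσ : 0 < σ) (b : ℝ) :
    arctan b / (2 * σ) < π / (4 * σ) := by
  rw [show π / (4 * σ) = π / 2 / (2 * σ) by ring]
  exact div_lt_div_of_pos_right (arctan_lt_pi_div_two b) (by positivity)

end Trigonometry

section Propagation

variable {σ a s : ℝ} (m : ℝ)

lemma neg_div_two_mul_add_half_pos_iff (hσ : 0 < σ) : 0 < -(s / (2 * σ)) + a / 2 ↔ s < a * σ := by
  rw [show -(s / (2 * σ)) + a / 2 = (a * σ - s) / (2 * σ) by field_simp; ring,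
    div_pos_iff_of_pos_right (by positivity), sub_pos]

lemma exp_mul_sq_div_eq_exp_quadratic (s σ y : ℝ) :
    exp (s * y ^ 2 / (2 * σ)) = exp (-(-(s / (2 * σ))) * y ^ 2 + 0 * y + 0) := by
  ring_nf

lemma integrable_exp_mul_sq_mul_gaussianDensity_iff (hσ : 0 < σ) (ha : 0 < a) :
    Integrable (fun y => exp (s * y ^ 2 / (2 * σ)) * gaussianDensity a m y) ↔ s < a * σ := by
  simp_rw [exp_mul_sq_div_eq_exp_quadratic s σ]
  rw [integrable_exp_quadratic_mul_gaussianDensity_iff m ha, neg_div_two_mul_add_half_pos_iff hσ]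

lemma gaussianPropagation_prefactor_eq (hσ : 0 < σ) (hs : 0 < s) (hsa : s < a * σ) :
    (√(2 * π * σ * s))⁻¹ * √(π / (1 / (2 * σ * s) + a / 2)) / √(π / (-(s / (2 * σ)) + a / 2))
      = √((a * σ - s) / (σ * (1 + a * σ * s)) / (2 * π)) := by
  have ha : 0 < a := by by_contra! h; nlinarith
  have : 0 < a * σ - s := by linarith
  rw [← sqrt_inv, ← sqrt_mul (by positivity), ← sqrt_div (by positivity)]
  congr 1
  field_simp
  ring

-- The left side is in the shape in which `integral_exp_quadratic_mul_gaussianDensity` delivers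
-- the exponents of the two integrals in `uTrig`; `c` and `s` stand for `cos (2σt)` and `tan (2σt)`.
lemma gaussianPropagation_exponent_eq (hσ : σ ≠ 0) (hs : s ≠ 0) {c : ℝ}
    (hc : c ^ 2 * (1 + s ^ 2) = 1) (h₁ : 1 + a * σ * s ≠ 0) (h₂ : a * σ - s ≠ 0) (x : ℝ) :
    s * x ^ 2 / (2 * σ)
        + ((x / c / (σ * s) + a * m) ^ 2 / (4 * (1 / (2 * σ * s) + a / 2))
          + (-(x / c) ^ 2 / (2 * σ * s) - a * m ^ 2 / 2))
        - ((0 + a * m) ^ 2 / (4 * (-(s / (2 * σ)) + a / 2)) + (0 - a * m ^ 2 / 2))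
      = -((a * σ - s) / (σ * (1 + a * σ * s))) * (x - m * a * σ / (a * σ * c - s * c)) ^ 2 / 2 := by
  have hc0 : c ≠ 0 := by rintro rfl; simp at hc
  have h₁' : 1 + s * σ * a ≠ 0 := by contrapose! h₁; linarith
  have h₂' : σ * a - s ≠ 0 := by contrapose! h₂; linarith
  rw [show 1 / (2 * σ * s) + a / 2 = (1 + a * σ * s) / (2 * σ * s) by field_simp,
    show -(s / (2 * σ)) + a / 2 = (a * σ - s) / (2 * σ) by field_simp; ring,
    show a * σ * c - s * c = c * (a * σ - s) by ring]
  linear_combination (norm := (field_simp; ring))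
    (a * x ^ 2 / (2 * c ^ 2 * (1 + a * σ * s))
      - a ^ 2 * m ^ 2 * σ / (2 * c ^ 2 * (1 + a * σ * s) * (a * σ - s))) * hc

theorem uTrig_gaussianDensity (hσ : 0 < σ) {t : ℝ} (hcos : cos (2 * σ * t) ≠ 0)
    (hs : 0 < tan (2 * σ * t)) (hsa : tan (2 * σ * t) < a * σ) (x : ℝ) :
    uTrig σ (gaussianDensity a m) t x
      = √((a * σ - tan (2 * σ * t)) / (σ * (1 + a * σ * tan (2 * σ * t))) / (2 * π))
        * exp (-((a * σ - tan (2 * σ * t)) / (σ * (1 + a * σ * tan (2 * σ * t))))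
          * (x - m * a * σ / (a * σ * cos (2 * σ * t) - sin (2 * σ * t))) ^ 2 / 2) := by
  have ha : 0 < a := by by_contra! h; nlinarith
  have hsin : sin (2 * σ * t) = tan (2 * σ * t) * cos (2 * σ * t) := by
    rw [tan_eq_sin_div_cos, div_mul_cancel₀ _ hcos]
  have hc : cos (2 * σ * t) ^ 2 * (1 + tan (2 * σ * t) ^ 2) = 1 := by
    rw [← inv_one_add_tan_sq hcos, inv_mul_cancel₀ (by positivity)]
  set s := tan (2 * σ * t)
  set c := cos (2 * σ * t)
  have hnum : ∫ y, exp (-(x / c - y) ^ 2 / (2 * σ * s)) * gaussianDensity a m y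
      = √(a / (2 * π)) * (√(π / (1 / (2 * σ * s) + a / 2))
        * exp ((x / c / (σ * s) + a * m) ^ 2 / (4 * (1 / (2 * σ * s) + a / 2))
          + (-(x / c) ^ 2 / (2 * σ * s) - a * m ^ 2 / 2))) := by
    simp_rw [show ∀ y, -(x / c - y) ^ 2 / (2 * σ * s)
        = -(1 / (2 * σ * s)) * y ^ 2 + x / c / (σ * s) * y + -(x / c) ^ 2 / (2 * σ * s) from
      fun y => by field_simp; ring]
    exact integral_exp_quadratic_mul_gaussianDensity m (by positivity) _ _
  have hden : ∫ y, exp (s * y ^ 2 / (2 * σ)) * gaussianDensity a m y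
      = √(a / (2 * π)) * (√(π / (-(s / (2 * σ)) + a / 2))
        * exp ((0 + a * m) ^ 2 / (4 * (-(s / (2 * σ)) + a / 2)) + (0 - a * m ^ 2 / 2))) := by
    simp_rw [exp_mul_sq_div_eq_exp_quadratic s σ]
    exact integral_exp_quadratic_mul_gaussianDensity m
      ((neg_div_two_mul_add_half_pos_iff hσ).2 hsa) _ _
  rw [uTrig, hnum, hden, hsin, mul_div_assoc, mul_div_mul_left _ _ (by positivity),
    ← gaussianPropagation_prefactor_eq hσ hs hsa,
    ← gaussianPropagation_exponent_eq m hσ.ne' hs.ne' hc (by positivity) (by linarith),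
    exp_sub, exp_add (s * x ^ 2 / (2 * σ))]
  ring

lemma Tmax_gaussianDensity (hσ : 0 < σ) (ha : 0 < a) :
    Tmax σ (gaussianDensity a m) = arctan (a * σ) / (2 * σ) := by
  have hT := arctan_div_two_mul_lt_pi_div_four_mul hσ (a * σ)
  suffices {t : ℝ | 0 ≤ t ∧ t < π / (4 * σ) ∧
      Integrable (fun y => exp (tan (2 * σ * t) * y ^ 2 / (2 * σ)) * gaussianDensity a m y)}
      = Set.Ico 0 (arctan (a * σ) / (2 * σ)) by
    rw [Tmax, this, csSup_Ico (div_pos (arctan_pos.2 (by positivity)) (by positivity))]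
  ext t
  simp only [Set.mem_ofPred_eq, Set.mem_Ico, integrable_exp_mul_sq_mul_gaussianDensity_iff m hσ ha]
  constructor
  · rintro ⟨ht₀, ht, htan⟩
    exact ⟨ht₀, (tan_two_mul_lt_iff hσ ht₀ ht _).1 htan⟩
  · rintro ⟨ht₀, ht⟩
    exact ⟨ht₀, ht.trans hT, (tan_two_mul_lt_iff hσ ht₀ (ht.trans hT) _).2 ht⟩

end Propagation

theorem propagation_of_gaussian_data_pos_quadratic
    (σ : ℝ) (hσ : 0 < σ) (a m : ℝ) (ha : 0 < a) (u₀ : ℝ → ℝ)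
    (hu₀ : u₀ = fun x => Real.sqrt (a / (2 * Real.pi)) * Real.exp (-a * (x - m) ^ 2 / 2)) :
    (∀ t : ℝ, 0 < t → t < Real.arctan (a * σ) / (2 * σ) → ∀ x : ℝ,
      uTrig σ u₀ t x
        = Real.sqrt ((a * σ - Real.tan (2 * σ * t))
              / (σ * (1 + a * σ * Real.tan (2 * σ * t))) / (2 * Real.pi))
          * Real.exp (-((a * σ - Real.tan (2 * σ * t))
              / (σ * (1 + a * σ * Real.tan (2 * σ * t))))
            * (x - m * a * σ / (a * σ * Real.cos (2 * σ * t) - Real.sin (2 * σ * t))) ^ 2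
            / 2)) ∧
    Tmax σ u₀ = Real.arctan (a * σ) / (2 * σ) ∧
    Real.arctan (a * σ) / (2 * σ) < Real.pi / (4 * σ) := by
  obtain rfl : u₀ = gaussianDensity a m := hu₀
  have hT := arctan_div_two_mul_lt_pi_div_four_mul hσ (a * σ)
  refine ⟨fun t ht₀ ht x => ?_, Tmax_gaussianDensity m hσ ha, hT⟩
  have htπ := ht.trans hT
  obtain ⟨hθ₁, hθ₂⟩ := two_mul_mem_Ioo_of_lt_pi_div_four_mul hσ ht₀.le htπ
  exact uTrig_gaussianDensity m hσ (cos_pos_of_mem_Ioo ⟨hθ₁, hθ₂⟩).ne'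
    (tan_pos_of_pos_of_lt_pi_div_two (by positivity) hθ₂)
    ((tan_two_mul_lt_iff hσ ht₀.le htπ _).2 ht) x
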